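/- Let G be a group acting on a set X. Let Conj_G(X) = {[G_x] : x ∈ X} be the set of conjugacy classes of point stabilizers. Then Aut_G(X) is isomorphic to the direct product, over all [H] ∈ Conj_G(X), of the unrestricted wreath products (N_G(H)/H) ≀ Sym(O_[H]), where O_[H] is the set of G-orbits whose point stabilizers are conjugate to H. -/

import Mathlib

/-!
Choosing in every orbit of type `[H]` a base point with stabilizer exactly `H` identifies `X`
equivariantly with `Σ [H], O_[H] × G/H`. A `G`-automorphism preserves stabilizers, hence the type
of every orbit, so `Aut_G(X)` is the product of the automorphism groups of the blocks
`O × G/H`. An automorphism of such a block permutes the copies of `G/H`, and on each copy it is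
determined by the image of the coset `H`, which is a coset `nH` with stabilizer `H`, that is,
with `n ∈ N_G(H)`; this is the wreath product `(N_G(H)/H) ≀ Sym(O)`.
-/

/-- The monoid of all `G`-equivariant transformations of `X`, as a submonoid of
`Function.End X` (composition of functions). -/
def gEnd (G X : Type*) [Group G] [MulAction G X] : Submonoid (Function.End X) where
  carrier := {f | ∀ (g : G) (x : X), f (g • x) = g • f x}
  one_mem' := fun _ _ => rfl
  mul_mem' := fun {f₁ f₂} h₁ h₂ g x => by
    show f₁ (f₂ (g • x)) = g • f₁ (f₂ x)
    rw [h₂, h₁]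

/-- The group of all bijective `G`-equivariant transformations of `X`, as a subgroup of
`Equiv.Perm X`. -/
def gAut (G X : Type*) [Group G] [MulAction G X] : Subgroup (Equiv.Perm X) where
  carrier := {f | ∀ (g : G) (x : X), f (g • x) = g • f x}
  one_mem' := fun _ _ => rfl
  mul_mem' := fun {f₁ f₂} h₁ h₂ g x => by
    show f₁ (f₂ (g • x)) = g • f₁ (f₂ x)
    rw [h₂, h₁]
  inv_mem' := fun {f} hf g x => f.injective (by
    rw [Equiv.Perm.inv_def, Equiv.apply_symm_apply, hf, Equiv.apply_symm_apply])

/-- The conjugate subgroup `g K g⁻¹`. -/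
def conjSub {G : Type*} [Group G] (g : G) (K : Subgroup G) : Subgroup G :=
  Subgroup.map (MulAut.conj g).toMonoidHom K

/-- The set `O_[H]` of `G`-orbits of `X` whose point stabilizers are conjugate to `H`. -/
def classOrbits (G X : Type*) [Group G] [MulAction G X] (H : Subgroup G) : Set (Set X) :=
  {s | ∃ y : X, (∃ g : G, MulAction.stabilizer G y = conjSub g H) ∧ s = MulAction.orbit G y}

/-- The quotient `N_G(H)/H` of the normalizer of `H` by `H`. -/
abbrev normQuot {G : Type*} [Group G] (H : Subgroup G) :=
  Subgroup.normalizer (H : Set G) ⧸ H.subgroupOf (Subgroup.normalizer (H : Set G))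

/-- The action of `Sym(Δ)` on `K^Δ` permuting the coordinates, as a homomorphism
into the automorphism group of the direct product `K^Δ`; it is used to form the
unrestricted wreath product `K ≀ Sym(Δ) = K^Δ ⋊ Sym(Δ)`. -/
def permCoordAut (K Δ : Type*) [Group K] : Equiv.Perm Δ →* MulAut (Δ → K) where
  toFun σ :=
    { toFun := fun f => f ∘ σ.symm
      invFun := fun f => f ∘ σ
      left_inv := fun f => by funext δ; simp
      right_inv := fun f => by funext δ; simp
      map_mul' := fun f g => rfl }
  map_one' := by ext f δ; rfl
  map_mul' := fun σ τ => by ext f δ; rfl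

open MulAction

section Stabilizer

variable {G X : Type*} [Group G] [MulAction G X]

lemma stabilizer_apply_of_injective {Y : Type*} [MulAction G Y] {f : X → Y}
    (hf : Function.Injective f) (hfG : ∀ (g : G) (x : X), f (g • x) = g • f x) (x : X) :
    stabilizer G (f x) = stabilizer G x := by
  ext g
  rw [mem_stabilizer_iff, mem_stabilizer_iff, ← hfG, hf.eq_iff]

lemma stabilizer_sigma_mk {ι : Type*} {Y : ι → Type*} [∀ i, MulAction G (Y i)] (i : ι)
    (y : Y i) : stabilizer G (⟨i, y⟩ : Σ j, Y j) = stabilizer G y :=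
  stabilizer_apply_of_injective sigma_mk_injective (fun _ _ => rfl) y

end Stabilizer

section Transport

variable {G X Y : Type*} [Group G] [MulAction G X] [MulAction G Y]

lemma Equiv.symm_smul_of_map_smul {e : X ≃ Y} (he : ∀ (g : G) (x : X), e (g • x) = g • e x)
    (g : G) (y : Y) : e.symm (g • y) = g • e.symm y :=
  e.symm_apply_eq.mpr (by rw [he, e.apply_symm_apply])

lemma permCongr_mem_gAut {e : X ≃ Y} (he : ∀ (g : G) (x : X), e (g • x) = g • e x)
    {τ : Equiv.Perm X} (hτ : τ ∈ gAut G X) : e.permCongr τ ∈ gAut G Y := fun g y => by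
  simp only [Equiv.permCongr_apply, Equiv.symm_smul_of_map_smul he, hτ g, he]

lemma map_permCongrHom_gAut {e : X ≃ Y} (he : ∀ (g : G) (x : X), e (g • x) = g • e x) :
    (gAut G X).map e.permCongrHom.toMonoidHom = gAut G Y := by
  ext σ
  rw [Subgroup.mem_map_equiv]
  refine ⟨fun h => ?_, permCongr_mem_gAut (Equiv.symm_smul_of_map_smul he)⟩
  have h' : e.permCongrHom (e.permCongrHom.symm σ) ∈ gAut G Y := permCongr_mem_gAut he h
  rwa [MulEquiv.apply_symm_apply] at h'

def gAutCongr (e : X ≃ Y) (he : ∀ (g : G) (x : X), e (g • x) = g • e x) :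
    gAut G X ≃* gAut G Y :=
  (e.permCongrHom.subgroupMap (gAut G X)).trans (MulEquiv.subgroupCongr (map_permCongrHom_gAut he))

end Transport

section Sigma

variable {G ι : Type*} [Group G] {Y : ι → Type*} [∀ i, MulAction G (Y i)]

def sigmaGAutHom : ((i : ι) → gAut G (Y i)) →* gAut G (Σ i, Y i) :=
  ((Equiv.Perm.sigmaCongrRightHom Y).comp
    (MonoidHom.piMap fun i => (gAut G (Y i)).subtype)).codRestrict (gAut G (Σ i, Y i))
      fun t g ⟨i, y⟩ => congrArg (Sigma.mk i) ((t i).2 g y)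

lemma sigmaGAutHom_injective : Function.Injective (sigmaGAutHom (G := G) (Y := Y)) :=
  fun _ _ h => funext fun i => Subtype.ext <|
    congrFun (Equiv.Perm.sigmaCongrRightHom_injective (congrArg Subtype.val h)) i

lemma sigmaGAutHom_surjective
    (hfst : ∀ τ : gAut G (Σ i, Y i), ∀ p, (τ.1 p).1 = p.1) :
    Function.Surjective (sigmaGAutHom (G := G) (Y := Y)) := by
  intro τ
  let τY (i : ι) : Equiv.Perm (Y i) := (Equiv.sigmaSubtype i).permCongr <|
    τ.1.subtypePerm (p := fun q => q.1 = i) fun q => by rw [hfst τ q]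
  have hτY (i : ι) (y : Y i) : (⟨i, τY i y⟩ : Σ i, Y i) = τ.1 ⟨i, y⟩ :=
    congrArg Subtype.val ((Equiv.sigmaSubtype i).symm_apply_apply ⟨_, hfst τ ⟨i, y⟩⟩)
  have hmem (i : ι) : τY i ∈ gAut G (Y i) := fun g y => sigma_mk_injective <| by
    rw [hτY, ← Sigma.smul_mk, τ.2 g, ← hτY]
    rfl
  exact ⟨fun i => ⟨τY i, hmem i⟩, Subtype.ext (Equiv.ext fun ⟨i, y⟩ => hτY i y)⟩

noncomputable def sigmaGAutEquiv
    (hfst : ∀ τ : gAut G (Σ i, Y i), ∀ p, (τ.1 p).1 = p.1) :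
    ((i : ι) → gAut G (Y i)) ≃* gAut G (Σ i, Y i) :=
  MulEquiv.ofBijective sigmaGAutHom ⟨sigmaGAutHom_injective, sigmaGAutHom_surjective hfst⟩

end Sigma

section Blocks

variable {G Δ Y : Type*} [Group G] [MulAction G Y]

lemma fst_apply_eq_of_mem_gAut [IsPretransitive G Y] {ρ : Equiv.Perm (Σ _ : Δ, Y)}
    (hρ : ρ ∈ gAut G (Σ _ : Δ, Y)) (δ : Δ) (y y' : Y) :
    (ρ ⟨δ, y⟩).1 = (ρ ⟨δ, y'⟩).1 := by
  obtain ⟨g, rfl⟩ := exists_smul_eq G y' y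
  exact (congrArg Sigma.fst (hρ g ⟨δ, y'⟩) :)

def gAutOrbitPerm [IsPretransitive G Y] (τ : gAut G (Σ _ : Δ, Y)) (y₀ : Y) :
    Equiv.Perm Δ where
  toFun δ := (τ.1 ⟨δ, y₀⟩).1
  invFun δ := ((τ⁻¹).1 ⟨δ, y₀⟩).1
  left_inv δ := by
    dsimp only
    rw [fst_apply_eq_of_mem_gAut (τ⁻¹).2 _ y₀ (τ.1 ⟨δ, y₀⟩).2]
    simp
  right_inv δ := by
    dsimp only
    rw [fst_apply_eq_of_mem_gAut τ.2 _ y₀ ((τ⁻¹).1 ⟨δ, y₀⟩).2]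
    simp

end Blocks

section NormalizerAction

variable {G : Type*} [Group G] {H : Subgroup G}

-- `nH` acts by right multiplication with `n⁻¹`: this is a left action commuting with `G`.
instance (H : Subgroup G) : SMul (normQuot H) (G ⧸ H) where
  smul η c := Quotient.liftOn₂' η c (fun n g => ((g * (n : G)⁻¹ : G) : G ⧸ H)) <| by
    intro n g n' g' hn hg
    rw [QuotientGroup.leftRel_apply, Subgroup.mem_subgroupOf] at hn
    rw [QuotientGroup.leftRel_apply] at hg
    rw [QuotientGroup.eq]
    have hn' := (Subgroup.mem_normalizer_iff.mp n.2 _).mp (H.inv_mem hn)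
    have hg' := (Subgroup.mem_normalizer_iff.mp n.2 _).mp hg
    convert H.mul_mem hg' hn' using 1
    simp [mul_assoc]

lemma normQuot_smul_mk (n : Subgroup.normalizer (H : Set G)) (g : G) :
    (n : normQuot H) • (g : G ⧸ H) = ((g * (n : G)⁻¹ : G) : G ⧸ H) := rfl

instance : MulAction (normQuot H) (G ⧸ H) where
  one_smul c := by
    induction c using QuotientGroup.induction_on with
    | H g => rw [← QuotientGroup.mk_one, normQuot_smul_mk]; simp
  mul_smul η θ c := by
    induction η using QuotientGroup.induction_on with | H n =>
    induction θ using QuotientGroup.induction_on with | H m =>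
    induction c using QuotientGroup.induction_on with | H g =>
    rw [← QuotientGroup.mk_mul, normQuot_smul_mk, normQuot_smul_mk, normQuot_smul_mk]
    simp [mul_assoc]

instance : SMulCommClass G (normQuot H) (G ⧸ H) where
  smul_comm g η c := by
    induction η using QuotientGroup.induction_on with | H n =>
    induction c using QuotientGroup.induction_on with | H a =>
    rw [MulAction.Quotient.smul_coe, normQuot_smul_mk, normQuot_smul_mk,
      MulAction.Quotient.smul_coe, smul_eq_mul, smul_eq_mul, mul_assoc]

lemma normQuot_smul_one_injective :
    Function.Injective fun η : normQuot H => η • ((1 : G) : G ⧸ H) := by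
  intro η θ h
  induction η using QuotientGroup.induction_on with | H n =>
  induction θ using QuotientGroup.induction_on with | H m =>
  simp only [normQuot_smul_mk, one_mul, QuotientGroup.eq, inv_inv] at h
  rw [QuotientGroup.eq, Subgroup.mem_subgroupOf]
  simpa using H.inv_mem ((Subgroup.mem_normalizer_iff.mp (inv_mem n.2) _).mp h)

instance : FaithfulSMul (normQuot H) (G ⧸ H) :=
  ⟨fun h => normQuot_smul_one_injective (h _)⟩

lemma exists_normQuot_smul_one_eq {c : G ⧸ H} (hc : stabilizer G c = H) :
    ∃ η : normQuot H, η • ((1 : G) : G ⧸ H) = c := by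
  induction c using QuotientGroup.induction_on with | H a =>
  have ha : a ∈ Subgroup.normalizer (H : Set G) := by
    have h := stabilizer_smul_eq_stabilizer_map_conj a ((1 : G) : G ⧸ H)
    rw [MulAction.Quotient.smul_coe, smul_eq_mul, mul_one, hc, stabilizer_quotient] at h
    exact Subgroup.mem_normalizer_iff_map_conj_eq.mpr h.symm
  refine ⟨((⟨a, ha⟩⁻¹ : Subgroup.normalizer (H : Set G)) : normQuot H), ?_⟩
  rw [normQuot_smul_mk]
  simp

end NormalizerAction

abbrev Wreath (K Δ : Type*) [Group K] := (Δ → K) ⋊[permCoordAut K Δ] Equiv.Perm Δ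

section Wreath

variable {K Δ Y : Type*} [Group K] [MulAction K Y]

instance : MulAction (Wreath K Δ) (Σ _ : Δ, Y) where
  smul w p := ⟨w.right p.1, w.left (w.right p.1) • p.2⟩
  one_smul p := Sigma.ext rfl (heq_of_eq (one_smul K p.2))
  mul_smul w₁ w₂ p := Sigma.ext rfl <| heq_of_eq <| by
    show (w₁.left _ * w₂.left (w₁.right⁻¹ (w₁.right (w₂.right p.1)))) • p.2 = _
    rw [Equiv.Perm.inv_def, Equiv.symm_apply_apply, mul_smul]
    rfl

lemma Wreath.smul_mk (w : Wreath K Δ) (δ : Δ) (y : Y) :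
    w • (⟨δ, y⟩ : Σ _ : Δ, Y) = ⟨w.right δ, w.left (w.right δ) • y⟩ := rfl

instance [FaithfulSMul K Y] [Nonempty Y] : FaithfulSMul (Wreath K Δ) (Σ _ : Δ, Y) where
  eq_of_smul_eq_smul {w₁ w₂} h := by
    obtain ⟨y₀⟩ := ‹Nonempty Y›
    have hright : w₁.right = w₂.right :=
      Equiv.ext fun δ => congrArg Sigma.fst (h ⟨δ, y₀⟩)
    refine SemidirectProduct.ext (funext fun δ => eq_of_smul_eq_smul (α := Y) fun y => ?_) hright
    have := h ⟨w₁.right⁻¹ δ, y⟩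
    rw [Wreath.smul_mk, Wreath.smul_mk, ← hright, Equiv.Perm.inv_def,
      Equiv.apply_symm_apply] at this
    exact eq_of_heq (Sigma.mk.inj this).2

instance {G : Type*} [Group G] [MulAction G Y] [SMulCommClass G K Y] :
    SMulCommClass G (Wreath K Δ) (Σ _ : Δ, Y) where
  smul_comm g w p := Sigma.ext rfl (heq_of_eq (smul_comm g (w.left (w.right p.1)) p.2))

end Wreath

section WreathGAut

variable {G : Type*} [Group G] {K Δ Y : Type*} [Group K] [MulAction K Y] [MulAction G Y]
  [SMulCommClass G K Y]

variable (G) in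
def Wreath.toGAut : Wreath K Δ →* gAut G (Σ _ : Δ, Y) :=
  (MulAction.toPermHom (Wreath K Δ) (Σ _ : Δ, Y)).codRestrict (gAut G (Σ _ : Δ, Y))
    fun w g p => (smul_comm g w p).symm

lemma Wreath.toGAut_injective [FaithfulSMul K Y] [Nonempty Y] :
    Function.Injective (Wreath.toGAut G : Wreath K Δ →* gAut G (Σ _ : Δ, Y)) :=
  fun _ _ h => MulAction.toPerm_injective (congrArg Subtype.val h)

lemma Wreath.toGAut_surjective_of_quotient (H : Subgroup G) :
    Function.Surjective
      (Wreath.toGAut G : Wreath (normQuot H) Δ →* gAut G (Σ _ : Δ, G ⧸ H)) := by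
  intro τ
  set o : G ⧸ H := ((1 : G) : G ⧸ H)
  set σ := gAutOrbitPerm τ o
  have hstab (δ : Δ) : stabilizer G (τ.1 ⟨δ, o⟩).2 = H := by
    rw [← stabilizer_sigma_mk (Y := fun _ : Δ => G ⧸ H) (σ δ)]
    change stabilizer G (τ.1 ⟨δ, o⟩) = H
    rw [stabilizer_apply_of_injective (Equiv.injective _) τ.2, stabilizer_sigma_mk,
      stabilizer_quotient]
  choose η hη using fun δ => exists_normQuot_smul_one_eq (hstab δ)
  refine ⟨⟨η ∘ σ.symm, σ⟩, Subtype.ext (Equiv.ext fun ⟨δ, c⟩ => ?_)⟩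
  obtain ⟨g, rfl⟩ := exists_smul_eq G o c
  calc (⟨σ δ, η (σ.symm (σ δ)) • g • o⟩ : Σ _ : Δ, G ⧸ H)
        = g • ⟨σ δ, η δ • o⟩ := by
          rw [σ.symm_apply_apply, ← smul_comm g (η δ) o]; rfl
    _ = g • τ.1 ⟨δ, o⟩ := by rw [hη]; rfl
    _ = τ.1 ⟨δ, g • o⟩ := (τ.2 g ⟨δ, o⟩).symm

variable (G) in
noncomputable def Wreath.gAutEquivOfQuotient (H : Subgroup G) (Δ : Type*) :
    Wreath (normQuot H) Δ ≃* gAut G (Σ _ : Δ, G ⧸ H) :=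
  MulEquiv.ofBijective (Wreath.toGAut G)
    ⟨Wreath.toGAut_injective, Wreath.toGAut_surjective_of_quotient H⟩

end WreathGAut

section OrbitModel

variable {G X ι : Type*} [Group G] [MulAction G X]

lemma exists_basepoint {H : Subgroup G} {s : Set X} (hs : s ∈ classOrbits G X H) :
    ∃ b : X, stabilizer G b = H ∧ orbit G b = s := by
  obtain ⟨y, ⟨g, hg⟩, rfl⟩ := hs
  refine ⟨g⁻¹ • y, ?_, orbit_smul _ _⟩
  rw [stabilizer_smul_eq_stabilizer_map_conj, hg]
  ext x
  simp [conjSub, Subgroup.mem_map, mul_assoc]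

variable (G X) in
abbrev OrbitModel (Hrep : ι → Subgroup G) := Σ i, Σ _ : classOrbits G X (Hrep i), G ⧸ Hrep i

variable {Hrep : ι → Subgroup G} {bp : ∀ i, classOrbits G X (Hrep i) → X}
  (hbp : ∀ i s, stabilizer G (bp i s) = Hrep i ∧ orbit G (bp i s) = s)

def orbitModelMap : OrbitModel G X Hrep → X :=
  fun ⟨i, s, c⟩ => c.liftOn' (· • bp i s) fun a b hab => by
    rw [QuotientGroup.leftRel_apply, ← (hbp i s).1, mem_stabilizer_iff, mul_smul,
      inv_smul_eq_iff] at hab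
    exact hab.symm

lemma orbitModelMap_mk (i : ι) (s : classOrbits G X (Hrep i)) (a : G) :
    orbitModelMap hbp ⟨i, s, a⟩ = a • bp i s := rfl

lemma orbitModelMap_smul (g : G) (p : OrbitModel G X Hrep) :
    orbitModelMap hbp (g • p) = g • orbitModelMap hbp p := by
  obtain ⟨i, s, c⟩ := p
  induction c using QuotientGroup.induction_on with | H a =>
  exact mul_smul g a (bp i s)

lemma orbit_orbitModelMap (i : ι) (s : classOrbits G X (Hrep i)) (c : G ⧸ Hrep i) :
    orbit G (orbitModelMap hbp ⟨i, s, c⟩) = s := by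
  induction c using QuotientGroup.induction_on with | H a =>
  rw [orbitModelMap_mk, orbit_smul, (hbp i s).2]

lemma exists_stabilizer_orbitModelMap_eq_conjSub
    (p : OrbitModel G X Hrep) :
    ∃ a : G, stabilizer G (orbitModelMap hbp p) = conjSub a (Hrep p.1) := by
  obtain ⟨i, s, c⟩ := p
  induction c using QuotientGroup.induction_on with | H a =>
  exact ⟨a, by rw [orbitModelMap_mk, stabilizer_smul_eq_stabilizer_map_conj, (hbp i s).1]; rfl⟩

lemma fst_eq_of_stabilizer_orbitModelMap_eq
    (h2 : ∀ x : X, ∃! i, ∃ g : G, stabilizer G x = conjSub g (Hrep i))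
    {p q : OrbitModel G X Hrep}
    (h : stabilizer G (orbitModelMap hbp p) = stabilizer G (orbitModelMap hbp q)) : p.1 = q.1 :=
  (h2 _).unique (exists_stabilizer_orbitModelMap_eq_conjSub hbp p)
    (h ▸ exists_stabilizer_orbitModelMap_eq_conjSub hbp q)

lemma orbitModelMap_injective
    (h2 : ∀ x : X, ∃! i, ∃ g : G, stabilizer G x = conjSub g (Hrep i)) :
    Function.Injective (orbitModelMap hbp) := by
  rintro ⟨i, s, c⟩ ⟨j, t, c'⟩ h
  obtain rfl : i = j := fst_eq_of_stabilizer_orbitModelMap_eq hbp h2 (congrArg _ h)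
  obtain rfl : s = t := Subtype.ext <| by
    rw [← orbit_orbitModelMap hbp i s c, ← orbit_orbitModelMap hbp i t c', h]
  induction c using QuotientGroup.induction_on with | H a =>
  induction c' using QuotientGroup.induction_on with | H b =>
  rw [orbitModelMap_mk, orbitModelMap_mk] at h
  congr 2
  rw [QuotientGroup.eq, ← (hbp i s).1, mem_stabilizer_iff, mul_smul, ← h, inv_smul_smul]

lemma orbitModelMap_surjective
    (h2 : ∀ x : X, ∃! i, ∃ g : G, stabilizer G x = conjSub g (Hrep i)) :
    Function.Surjective (orbitModelMap hbp) := by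
  intro x
  obtain ⟨i, hi, -⟩ := h2 x
  let s : classOrbits G X (Hrep i) := ⟨orbit G x, x, hi, rfl⟩
  obtain ⟨g, hg⟩ : x ∈ orbit G (bp i s) := by rw [(hbp i s).2]; exact mem_orbit_self x
  exact ⟨⟨i, s, g⟩, hg⟩

lemma fst_apply_orbitModel
    (hbp : ∀ i s, stabilizer G (bp i s) = Hrep i ∧ orbit G (bp i s) = s)
    (h2 : ∀ x : X, ∃! i, ∃ g : G, stabilizer G x = conjSub g (Hrep i))
    (τ : gAut G (OrbitModel G X Hrep))
    (p : OrbitModel G X Hrep) :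
    (τ.1 p).1 = p.1 := by
  have hinj := orbitModelMap_injective hbp h2
  apply fst_eq_of_stabilizer_orbitModelMap_eq hbp h2
  rw [stabilizer_apply_of_injective hinj (orbitModelMap_smul hbp),
    stabilizer_apply_of_injective hinj (orbitModelMap_smul hbp),
    stabilizer_apply_of_injective (Equiv.injective _) τ.2]

end OrbitModel

theorem stmt8_general {G X : Type*} [Group G] [MulAction G X] (ι : Type*) (Hrep : ι → Subgroup G)
    (h2 : ∀ x : X, ∃! i, ∃ g : G, MulAction.stabilizer G x = conjSub g (Hrep i)) :
    Nonempty ((gAut G X) ≃*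
      ((i : ι) → ((↑(classOrbits G X (Hrep i)) → normQuot (Hrep i))
        ⋊[permCoordAut (normQuot (Hrep i)) ↑(classOrbits G X (Hrep i))]
        Equiv.Perm ↑(classOrbits G X (Hrep i))))) := by
  choose bp hbp using fun i (s : classOrbits G X (Hrep i)) => exists_basepoint s.2
  let e := Equiv.ofBijective _ ⟨orbitModelMap_injective hbp h2, orbitModelMap_surjective hbp h2⟩
  exact ⟨(gAutCongr e (orbitModelMap_smul hbp)).symm.trans <|
    (sigmaGAutEquiv (fst_apply_orbitModel hbp h2)).symm.trans <|
    MulEquiv.piCongrRight fun i => (Wreath.gAutEquivOfQuotient G (Hrep i) _).symm⟩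

/-- `Aut_G(X)` is isomorphic to the direct product, over the distinct
conjugacy classes `[H]` of point stabilizers (here indexed by `ι` through representatives
`Hrep`), of the unrestricted wreath products `(N_G(H)/H) ≀ Sym(O_[H])`. -/
theorem stmt8 {G X : Type*} [Group G] [MulAction G X] (ι : Type*) (Hrep : ι → Subgroup G)
    (h1 : ∀ i, ∃ x : X, MulAction.stabilizer G x = Hrep i)
    (h2 : ∀ x : X, ∃! i, ∃ g : G, MulAction.stabilizer G x = conjSub g (Hrep i)) :
    Nonempty ((gAut G X) ≃*
      ((i : ι) → ((↑(classOrbits G X (Hrep i)) → normQuot (Hrep i))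
        ⋊[permCoordAut (normQuot (Hrep i)) ↑(classOrbits G X (Hrep i))]
        Equiv.Perm ↑(classOrbits G X (Hrep i))))) :=
  stmt8_general ι Hrep h2
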